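/- arXiv:2009.13814 — 2 statements merged into one kernel-verified Lean document; each statement's English description precedes it below -/
import Mathlib

section
/- If A, B, C are Young functions with A⁻¹(t) B⁻¹(t) ≤ c₁ C⁻¹(t) for all t ≥ t₀ > 0, then there is c₂ > 0 such that for every cube Q and all measurable f, g, one has ‖fg‖_{C,Q} ≤ c₂ ‖f‖_{A,Q} ‖g‖_{B,Q}. -/
open MeasureTheory Set Filter ENNReal

noncomputable section

/-- `Q ⊆ ℝⁿ` is a cube (axis-parallel, with positive side length). -/
def IsCube {n : ℕ} (Q : Set (Fin n → ℝ)) : Prop :=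
  ∃ (a : Fin n → ℝ) (h : ℝ), 0 < h ∧ Q = Set.univ.pi fun i => Set.Ico (a i) (a i + h)

structure YoungFunction where
  toFun : ℝ → ℝ
  continuousOn : ContinuousOn toFun (Set.Ici 0)
  convexOn : ConvexOn ℝ (Set.Ici 0) toFun
  strictMonoOn : StrictMonoOn toFun (Set.Ici 0)
  map_zero : toFun 0 = 0
  tendsto_zero : Tendsto (fun t => toFun t / t) (nhdsWithin 0 (Set.Ioi 0)) (nhds 0)
  tendsto_top : Tendsto (fun t => toFun t / t) atTop atTop

/-- The generalized inverse `Φ⁻¹(t) = inf {s ≥ 0 : Φ(s) > t}`. -/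
def geninv (Φ : ℝ → ℝ) (t : ℝ) : ℝ := sInf {s : ℝ | 0 ≤ s ∧ t < Φ s}

/-- The normalized Luxemburg norm
`‖f‖_{Φ,Q} = inf {λ > 0 : (1/|Q|) ∫_Q Φ(|f|/λ) ≤ 1}` (with value `∞` if no such `λ`). -/
def eLuxNorm {n : ℕ} (Φ : ℝ → ℝ) (Q : Set (Fin n → ℝ)) (f : (Fin n → ℝ) → ℝ) : ℝ≥0∞ :=
  sInf {lam : ℝ≥0∞ | ∃ l : ℝ, 0 < l ∧ lam = ENNReal.ofReal l ∧
    (∫⁻ x in Q, ENNReal.ofReal (Φ (|f x| / l))) ≤ volume Q}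

/-! For `u, v ≥ 0` put `t = max t₀ (A u + B v)`. Then `u ≤ A⁻¹ t` and `v ≤ B⁻¹ t`, so
`u v / c₁ ≤ C⁻¹ t` and hence `C (u v / c₁) ≤ A u + B v + t₀`. Applied to `u = |f| / λ_A`,
`v = |g| / λ_B` with `λ_A, λ_B` admissible for the Luxemburg norms of `f` and `g`, and combined
with `C (x / k) ≤ C x / k` for `k = 2 + t₀ ≥ 1` (convexity and `C 0 = 0`), integration over `Q`
shows that `c₁ (2 + t₀) λ_A λ_B` is admissible for `f g`; taking infima gives `c₂ = c₁ (2 + t₀)`.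

When a norm on the right vanishes, the product may be `0 · ∞ = 0`, so one shows `f g = 0` a.e.
on `Q` instead: by Fatou, `liminf_m A ((m + 1) |f|)` has integral at most `|Q| < ∞`, while it is
infinite wherever `f ≠ 0`. -/

namespace YoungFunction

variable (Φ : YoungFunction)

lemma nonneg {x : ℝ} (hx : 0 ≤ x) : 0 ≤ Φ.toFun x :=
  Φ.map_zero ▸ Φ.strictMonoOn.monotoneOn self_mem_Ici hx hx

lemma tendsto_atTop : Tendsto Φ.toFun atTop atTop := by
  refine tendsto_atTop_mono' _ ?_ Φ.tendsto_top
  filter_upwards [eventually_ge_atTop 1] with t ht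
  rw [div_le_iff₀ (by linarith)]
  nlinarith [Φ.nonneg (zero_le_one.trans ht)]

lemma apply_mul_le_mul {t x : ℝ} (ht₀ : 0 ≤ t) (ht₁ : t ≤ 1) (hx : 0 ≤ x) :
    Φ.toFun (t * x) ≤ t * Φ.toFun x := by
  have := Φ.convexOn.2 self_mem_Ici (mem_Ici.2 hx) (sub_nonneg.2 ht₁) ht₀ (by ring)
  simpa [Φ.map_zero] using this

lemma measurable_ofReal_apply_abs_div {α : Type*} [MeasurableSpace α] {f : α → ℝ}
    (hf : Measurable f) {l : ℝ} (hl : 0 ≤ l) :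
    Measurable fun x => ENNReal.ofReal (Φ.toFun (|f x| / l)) :=
  have hΦ := (continuousOn_iff_continuous_domRestrict.1 Φ.continuousOn).measurable
  ENNReal.measurable_ofReal.comp <| hΦ.comp <|
    (hf.abs.div_const l).subtype_mk (p := (· ∈ Ici 0))
      (h := fun _ => div_nonneg (abs_nonneg _) hl)

lemma geninv_nonneg (t : ℝ) : 0 ≤ geninv Φ.toFun t :=
  Real.sInf_nonneg fun _ hs => hs.1

lemma nonempty_setOf_lt_apply (t : ℝ) : {s : ℝ | 0 ≤ s ∧ t < Φ.toFun s}.Nonempty := by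
  obtain ⟨s, hs⟩ := (Φ.tendsto_atTop.eventually_gt_atTop t).exists_forall_of_atTop
  exact ⟨max s 0, le_max_right _ _, hs _ (le_max_left _ _)⟩

lemma le_geninv {u t : ℝ} (hu : 0 ≤ u) (h : Φ.toFun u ≤ t) : u ≤ geninv Φ.toFun t :=
  le_csInf (Φ.nonempty_setOf_lt_apply t) fun _ hs =>
    (Φ.strictMonoOn.lt_iff_lt hu hs.1).1 (h.trans_lt hs.2) |>.le

lemma apply_geninv_le {t : ℝ} (ht : 0 ≤ t) : Φ.toFun (geninv Φ.toFun t) ≤ t := by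
  rcases (Φ.geninv_nonneg t).eq_or_lt with h₀ | h₀
  · rwa [← h₀, Φ.map_zero]
  have hclosed : IsClosed (Ici 0 ∩ Φ.toFun ⁻¹' Iic t) :=
    Φ.continuousOn.preimage_isClosed_of_isClosed isClosed_Ici isClosed_Iic
  have hsub : Ico 0 (geninv Φ.toFun t) ⊆ Ici 0 ∩ Φ.toFun ⁻¹' Iic t := fun s hs =>
    ⟨hs.1, not_lt.1 fun hts => notMem_of_lt_csInf hs.2 ⟨0, fun _ h => h.1⟩ ⟨hs.1, hts⟩⟩
  have := hclosed.closure_subset_iff.2 hsub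
  rw [closure_Ico h₀.ne] at this
  exact (this (right_mem_Icc.2 h₀.le)).2

end YoungFunction

theorem apply_mul_div_le_add {A B C : YoungFunction} {c₁ t₀ : ℝ} (hc₁ : 0 < c₁) (ht₀ : 0 ≤ t₀)
    (h : ∀ t : ℝ, t₀ ≤ t → geninv A.toFun t * geninv B.toFun t ≤ c₁ * geninv C.toFun t)
    {u v : ℝ} (hu : 0 ≤ u) (hv : 0 ≤ v) :
    C.toFun (u * v / c₁) ≤ A.toFun u + B.toFun v + t₀ := by
  set t := max t₀ (A.toFun u + B.toFun v)
  have hA₀ := A.nonneg hu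
  have hB₀ := B.nonneg hv
  have hsum : A.toFun u + B.toFun v ≤ t := le_max_right _ _
  have hAu : u ≤ geninv A.toFun t := A.le_geninv hu (by linarith)
  have hBv : v ≤ geninv B.toFun t := B.le_geninv hv (by linarith)
  have huv : u * v / c₁ ≤ geninv C.toFun t := by
    rw [div_le_iff₀' hc₁]
    exact (mul_le_mul hAu hBv hv (A.geninv_nonneg t)).trans (h t (le_max_left _ _))
  calc C.toFun (u * v / c₁) ≤ C.toFun (geninv C.toFun t) :=
        C.strictMonoOn.monotoneOn (mem_Ici.2 (by positivity)) (C.geninv_nonneg t) huv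
    _ ≤ t := C.apply_geninv_le (ht₀.trans (le_max_left _ _))
    _ ≤ A.toFun u + B.toFun v + t₀ := max_le (by linarith) (by linarith)

theorem mul_apply_mul_div_le_add {A B C : YoungFunction} {c₁ t₀ : ℝ} (hc₁ : 0 < c₁)
    (ht₀ : 0 ≤ t₀)
    (h : ∀ t : ℝ, t₀ ≤ t → geninv A.toFun t * geninv B.toFun t ≤ c₁ * geninv C.toFun t)
    {u v : ℝ} (hu : 0 ≤ u) (hv : 0 ≤ v) :
    (2 + t₀) * C.toFun (u * v / (c₁ * (2 + t₀))) ≤ A.toFun u + B.toFun v + t₀ := by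
  have hk : 0 < 2 + t₀ := by linarith
  calc (2 + t₀) * C.toFun (u * v / (c₁ * (2 + t₀)))
      = (2 + t₀) * C.toFun ((2 + t₀)⁻¹ * (u * v / c₁)) := by field_simp
    _ ≤ (2 + t₀) * ((2 + t₀)⁻¹ * C.toFun (u * v / c₁)) := by
        gcongr
        exact C.apply_mul_le_mul (by positivity) (inv_le_one_of_one_le₀ (by linarith))
          (by positivity)
    _ = C.toFun (u * v / c₁) := by field_simp
    _ ≤ A.toFun u + B.toFun v + t₀ := apply_mul_div_le_add hc₁ ht₀ h hu hv

theorem lintegral_apply_abs_mul_div_le {α : Type*} [MeasurableSpace α] {μ : Measure α}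
    {A B C : YoungFunction} {c₁ t₀ : ℝ} (hc₁ : 0 < c₁) (ht₀ : 0 ≤ t₀)
    (h : ∀ t : ℝ, t₀ ≤ t → geninv A.toFun t * geninv B.toFun t ≤ c₁ * geninv C.toFun t)
    {f g : α → ℝ} (hf : Measurable f) {lA lB : ℝ} (hlA : 0 < lA) (hlB : 0 < lB)
    (hA : ∫⁻ x, ENNReal.ofReal (A.toFun (|f x| / lA)) ∂μ ≤ μ univ)
    (hB : ∫⁻ x, ENNReal.ofReal (B.toFun (|g x| / lB)) ∂μ ≤ μ univ) :
    ∫⁻ x, ENNReal.ofReal (C.toFun (|f x * g x| / (c₁ * (2 + t₀) * lA * lB))) ∂μ ≤ μ univ := by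
  set k := 2 + t₀
  have hk : 0 < k := by linarith
  have hpointwise : ∀ x, ENNReal.ofReal k *
      ENNReal.ofReal (C.toFun (|f x * g x| / (c₁ * k * lA * lB))) ≤
      ENNReal.ofReal (A.toFun (|f x| / lA)) + ENNReal.ofReal (B.toFun (|g x| / lB)) +
        ENNReal.ofReal t₀ := by
    intro x
    have hu : 0 ≤ |f x| / lA := by positivity
    have hv : 0 ≤ |g x| / lB := by positivity
    have hscale : |f x * g x| / (c₁ * k * lA * lB) = |f x| / lA * (|g x| / lB) / (c₁ * k) := by
      rw [abs_mul]; field_simp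
    rw [← ENNReal.ofReal_mul hk.le, ← ENNReal.ofReal_add (A.nonneg hu) (B.nonneg hv),
      ← ENNReal.ofReal_add (by linarith [A.nonneg hu, B.nonneg hv]) ht₀, hscale]
    exact ENNReal.ofReal_le_ofReal (mul_apply_mul_div_le_add hc₁ ht₀ h hu hv)
  have hk_mul : ENNReal.ofReal k *
      ∫⁻ x, ENNReal.ofReal (C.toFun (|f x * g x| / (c₁ * k * lA * lB))) ∂μ ≤
      ENNReal.ofReal k * μ univ :=
    calc _ = ∫⁻ x, ENNReal.ofReal k *
            ENNReal.ofReal (C.toFun (|f x * g x| / (c₁ * k * lA * lB))) ∂μ :=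
          (lintegral_const_mul' _ _ ENNReal.ofReal_ne_top).symm
      _ ≤ ∫⁻ x, ENNReal.ofReal (A.toFun (|f x| / lA)) + ENNReal.ofReal (B.toFun (|g x| / lB)) +
            ENNReal.ofReal t₀ ∂μ := lintegral_mono hpointwise
      _ = (∫⁻ x, ENNReal.ofReal (A.toFun (|f x| / lA)) ∂μ) +
            (∫⁻ x, ENNReal.ofReal (B.toFun (|g x| / lB)) ∂μ) + ENNReal.ofReal t₀ * μ univ := by
          rw [lintegral_add_right _ measurable_const,
            lintegral_add_left (A.measurable_ofReal_apply_abs_div hf hlA.le), lintegral_const]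
      _ ≤ μ univ + μ univ + ENNReal.ofReal t₀ * μ univ := by gcongr
      _ = ENNReal.ofReal k * μ univ := by
          rw [ENNReal.ofReal_add zero_le_two ht₀, ENNReal.ofReal_ofNat]; ring
  exact (ENNReal.mul_le_mul_iff_right (ENNReal.ofReal_pos.2 hk).ne' ENNReal.ofReal_ne_top).1 hk_mul

def LuxAdmissible {n : ℕ} (Φ : ℝ → ℝ) (Q : Set (Fin n → ℝ)) (f : (Fin n → ℝ) → ℝ) (l : ℝ) :
    Prop :=
  0 < l ∧ ∫⁻ x in Q, ENNReal.ofReal (Φ (|f x| / l)) ≤ volume Q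

section LuxAdmissible

variable {n : ℕ} {Q : Set (Fin n → ℝ)} {f : (Fin n → ℝ) → ℝ} {l : ℝ}

lemma eLuxNorm_le_ofReal {Φ : ℝ → ℝ} (h : LuxAdmissible Φ Q f l) :
    eLuxNorm Φ Q f ≤ ENNReal.ofReal l :=
  sInf_le ⟨l, h.1, rfl, h.2⟩

lemma exists_luxAdmissible_of_eLuxNorm_lt {Φ : ℝ → ℝ} {a : ℝ≥0∞} (h : eLuxNorm Φ Q f < a) :
    ∃ l, LuxAdmissible Φ Q f l ∧ ENNReal.ofReal l < a := by
  obtain ⟨_, ⟨l, hl, rfl, hint⟩, hla⟩ := sInf_lt_iff.1 h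
  exact ⟨l, ⟨hl, hint⟩, hla⟩

lemma LuxAdmissible.mono (Φ : YoungFunction) {l' : ℝ} (h : LuxAdmissible Φ.toFun Q f l)
    (hll' : l ≤ l') : LuxAdmissible Φ.toFun Q f l' := by
  have hl := h.1
  have hl' : 0 < l' := hl.trans_le hll'
  refine ⟨hl', le_trans (lintegral_mono fun x => ENNReal.ofReal_le_ofReal ?_) h.2⟩
  exact Φ.strictMonoOn.monotoneOn (mem_Ici.2 (by positivity)) (mem_Ici.2 (by positivity))
    (div_le_div_of_nonneg_left (abs_nonneg _) hl hll')

lemma eLuxNorm_eq_zero_iff (Φ : YoungFunction) :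
    eLuxNorm Φ.toFun Q f = 0 ↔ ∀ l, 0 < l → LuxAdmissible Φ.toFun Q f l := by
  refine ⟨fun h0 l hl => ?_, fun h => ?_⟩
  · obtain ⟨l', hl', hl'l⟩ :=
      exists_luxAdmissible_of_eLuxNorm_lt (h0.trans_lt (ENNReal.ofReal_pos.2 hl))
    exact hl'.mono Φ ((ENNReal.ofReal_lt_ofReal_iff hl).1 hl'l).le
  · refine le_antisymm (ENNReal.le_of_forall_pos_le_add fun ε hε _ => ?_) zero_le
    simpa using eLuxNorm_le_ofReal (h ε hε)

lemma luxAdmissible_of_ae_eq_zero (Φ : YoungFunction) (hf : f =ᵐ[volume.restrict Q] 0)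
    (hl : 0 < l) : LuxAdmissible Φ.toFun Q f l := by
  have hzero : (fun x => ENNReal.ofReal (Φ.toFun (|f x| / l))) =ᵐ[volume.restrict Q] 0 := by
    filter_upwards [hf] with x hx
    simp [hx, Φ.map_zero]
  refine ⟨hl, ?_⟩
  rw [lintegral_congr_ae hzero, lintegral_zero_fun]
  exact zero_le

lemma ae_eq_zero_of_forall_luxAdmissible (Φ : YoungFunction) (hQ : volume Q ≠ ⊤)
    (hf : Measurable f) (h : ∀ l, 0 < l → LuxAdmissible Φ.toFun Q f l) :
    f =ᵐ[volume.restrict Q] 0 := by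
  set F : ℕ → (Fin n → ℝ) → ℝ≥0∞ := fun m x => ENNReal.ofReal (Φ.toFun (|f x| / (m + 1 : ℝ)⁻¹))
  have hF : ∀ m, Measurable (F m) := fun m => Φ.measurable_ofReal_apply_abs_div hf (by positivity)
  have hfatou : ∫⁻ x in Q, liminf (F · x) atTop ≤ volume Q :=
    (lintegral_liminf_le hF).trans <| liminf_le_of_frequently_le' <|
      Frequently.of_forall fun m => (h _ (by positivity)).2
  filter_upwards [ae_lt_top (Measurable.liminf hF) (ne_top_of_le_ne_top hQ hfatou)] with x hx
  by_contra hfx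
  have hlim : Tendsto (F · x) atTop (nhds ⊤) := by
    refine ENNReal.tendsto_ofReal_atTop.comp (Φ.tendsto_atTop.comp ?_)
    simp only [div_inv_eq_mul]
    exact (tendsto_natCast_atTop_atTop.atTop_add tendsto_const_nhds).const_mul_atTop
      (abs_pos.2 hfx)
  exact hx.ne hlim.liminf_eq

end LuxAdmissible

theorem LuxAdmissible.mul {n : ℕ} {Q : Set (Fin n → ℝ)} {A B C : YoungFunction} {c₁ t₀ : ℝ}
    (hc₁ : 0 < c₁) (ht₀ : 0 ≤ t₀)
    (h : ∀ t : ℝ, t₀ ≤ t → geninv A.toFun t * geninv B.toFun t ≤ c₁ * geninv C.toFun t)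
    {f g : (Fin n → ℝ) → ℝ} (hf : Measurable f) {lA lB : ℝ}
    (hA : LuxAdmissible A.toFun Q f lA) (hB : LuxAdmissible B.toFun Q g lB) :
    LuxAdmissible C.toFun Q (fun x => f x * g x) (c₁ * (2 + t₀) * lA * lB) := by
  have hlA := hA.1
  have hlB := hB.1
  refine ⟨by positivity, ?_⟩
  have := lintegral_apply_abs_mul_div_le (μ := volume.restrict Q) hc₁ ht₀ h hf hlA hlB
    (by simpa using hA.2) (by simpa using hB.2)
  simpa using this

theorem eLuxNorm_mul_le {n : ℕ} {Q : Set (Fin n → ℝ)} (hQ : volume Q ≠ ⊤)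
    {A B C : YoungFunction} {c₁ t₀ : ℝ} (hc₁ : 0 < c₁) (ht₀ : 0 ≤ t₀)
    (h : ∀ t : ℝ, t₀ ≤ t → geninv A.toFun t * geninv B.toFun t ≤ c₁ * geninv C.toFun t)
    {f g : (Fin n → ℝ) → ℝ} (hf : Measurable f) (hg : Measurable g) :
    eLuxNorm C.toFun Q (fun x => f x * g x) ≤
      ENNReal.ofReal (c₁ * (2 + t₀)) * eLuxNorm A.toFun Q f * eLuxNorm B.toFun Q g := by
  by_cases h0 : eLuxNorm A.toFun Q f = 0 ∨ eLuxNorm B.toFun Q g = 0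
  · have hfg : (fun x => f x * g x) =ᵐ[volume.restrict Q] 0 := by
      rcases h0 with h0 | h0
      · filter_upwards [ae_eq_zero_of_forall_luxAdmissible A hQ hf
          ((eLuxNorm_eq_zero_iff A).1 h0)] with x hx
        simp [hx]
      · filter_upwards [ae_eq_zero_of_forall_luxAdmissible B hQ hg
          ((eLuxNorm_eq_zero_iff B).1 h0)] with x hx
        simp [hx]
    rw [(eLuxNorm_eq_zero_iff C).2 fun l hl => luxAdmissible_of_ae_eq_zero C hfg hl]
    exact zero_le
  obtain ⟨hA0, hB0⟩ := not_or.1 h0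
  set c₂ := c₁ * (2 + t₀)
  have hc : ENNReal.ofReal c₂ ≠ 0 := (ENNReal.ofReal_pos.2 (by positivity)).ne'
  refine ENNReal.le_mul_of_forall_lt (Or.inl (mul_ne_zero hc hA0)) (Or.inr hB0)
    fun a ha b hb => ?_
  have hdiv : ∀ {x y : ℝ≥0∞}, x < y / ENNReal.ofReal c₂ ↔ ENNReal.ofReal c₂ * x < y :=
    fun {_ _} => (ENNReal.lt_div_iff_mul_lt (Or.inl hc) (Or.inl ENNReal.ofReal_ne_top)).trans
      (by rw [mul_comm])
  obtain ⟨lA, hA, hlA⟩ := exists_luxAdmissible_of_eLuxNorm_lt (hdiv.2 ha)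
  obtain ⟨lB, hB, hlB⟩ := exists_luxAdmissible_of_eLuxNorm_lt hb
  have hlA₀ := hA.1
  have hlB₀ := hB.1
  calc eLuxNorm C.toFun Q (fun x => f x * g x)
      ≤ ENNReal.ofReal (c₂ * lA * lB) := eLuxNorm_le_ofReal (hA.mul hc₁ ht₀ h hf hB)
    _ = ENNReal.ofReal c₂ * ENNReal.ofReal lA * ENNReal.ofReal lB := by
        rw [ENNReal.ofReal_mul (by positivity), ENNReal.ofReal_mul (by positivity)]
    _ ≤ a * b := mul_le_mul' (hdiv.1 hlA).le hlB.le

lemma IsCube.volume_ne_top {n : ℕ} {Q : Set (Fin n → ℝ)} (hQ : IsCube Q) : volume Q ≠ ⊤ := by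
  obtain ⟨a, h, -, rfl⟩ := hQ
  simp [volume_pi_pi, Real.volume_Ico]

/-- If `A⁻¹(t) B⁻¹(t) ≤ c₁ C⁻¹(t)` for `t ≥ t₀ > 0`, then
`‖fg‖_{C,Q} ≤ c₂ ‖f‖_{A,Q} ‖g‖_{B,Q}` for every cube `Q`. -/
theorem orlicz_holder_three {n : ℕ} (A B C : YoungFunction)
    (c₁ t₀ : ℝ) (hc₁ : 0 < c₁) (ht₀ : 0 < t₀)
    (h : ∀ t : ℝ, t₀ ≤ t → geninv A.toFun t * geninv B.toFun t ≤ c₁ * geninv C.toFun t) :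
    ∃ c₂ : ℝ, 0 < c₂ ∧
      ∀ (Q : Set (Fin n → ℝ)), IsCube Q →
        ∀ f g : (Fin n → ℝ) → ℝ, Measurable f → Measurable g →
          eLuxNorm C.toFun Q (fun x => f x * g x) ≤
            ENNReal.ofReal c₂ * eLuxNorm A.toFun Q f * eLuxNorm B.toFun Q g :=
  ⟨c₁ * (2 + t₀), by positivity, fun _ hQ _ _ hf hg =>
    eLuxNorm_mul_le hQ.volume_ne_top hc₁ ht₀.le h hf hg⟩

end
end

section
/- Sparse counting exponential decay: there exist constants c, α > 0 depending only on n and the sparseness constant such that for every η-sparse family 𝒮 of dyadic cubes, every cube Q, and every t > 0, |{x ∈ Q : ∑_{Q' ∈ 𝒮, Q' ⊆ Q} 1_{Q'}(x) > t}| ≤ c e^{−αt} |Q|. -/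
open MeasureTheory Set Filter ENNReal

noncomputable section

/-- A dyadic grid: a countable family of cubes, any two of which are nested or disjoint. -/
def IsDyadicGrid {n : ℕ} (𝒟 : Set (Set (Fin n → ℝ))) : Prop :=
  (∀ Q ∈ 𝒟, IsCube Q) ∧
  (∀ Q ∈ 𝒟, ∀ Q' ∈ 𝒟, Q ⊆ Q' ∨ Q' ⊆ Q ∨ Q ∩ Q' = ∅) ∧ 𝒟.Countable

/-- `𝒮` is `η`-sparse. -/
def IsSparse {n : ℕ} (η : ℝ) (𝒮 : Set (Set (Fin n → ℝ))) : Prop :=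
  ∃ E : Set (Fin n → ℝ) → Set (Fin n → ℝ),
    (∀ Q ∈ 𝒮, E Q ⊆ Q ∧ MeasurableSet (E Q) ∧ ENNReal.ofReal η * volume Q ≤ volume (E Q)) ∧
    𝒮.Pairwise fun Q Q' => Disjoint (E Q) (E Q')

/-- An `η`-sparse family of dyadic cubes. -/
def IsSparseDyadic {n : ℕ} (η : ℝ) (𝒮 : Set (Set (Fin n → ℝ))) : Prop :=
  IsSparse η 𝒮 ∧ ∃ 𝒟, IsDyadicGrid 𝒟 ∧ 𝒮 ⊆ 𝒟


/-! The ancestors of a member `R` of a laminar `η`-sparse family inside `Q` carry disjoint sets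
of measure at least `η |R|` inside `Q`, so there are finitely many of them; their number is the
depth of `R`. Members of equal depth are disjoint, and every member of depth `j` lies in a member
of each depth `k ≤ j`, so the unions `U k` of the members of depth `k` decrease, and the counting
function exceeds `t` only on `U (⌊t⌋ + 1)`. Sparseness at each level gives
`η |U k| ≤ |⋃_{depth R = k} E R|`; these sets are disjoint for different `k`, so `m ≥ 2 / η`
consecutive levels yield `2 |U (k + m)| ≤ |U k|`, and iterating gives `|U k| ≲ 2^{-k/m} |Q|`. -/

variable {X : Type*}

def IsLaminar (S : Set (Set X)) : Prop :=
  ∀ A ∈ S, ∀ B ∈ S, A ⊆ B ∨ B ⊆ A ∨ Disjoint A B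

lemma IsLaminar.mono {S 𝒟 : Set (Set X)} (h : IsLaminar 𝒟) (hS : S ⊆ 𝒟) : IsLaminar S :=
  fun A hA B hB => h A (hS hA) B (hS hB)

lemma IsLaminar.subset_or_subset_of_mem {S : Set (Set X)} (hS : IsLaminar S) {A B : Set X}
    (hA : A ∈ S) (hB : B ∈ S) {x : X} (hxA : x ∈ A) (hxB : x ∈ B) : A ⊆ B ∨ B ⊆ A :=
  (hS A hA B hB).imp_right fun h => h.resolve_right (not_disjoint_iff.2 ⟨x, hxA, hxB⟩)

lemma tsum_indicator_one_eq_encard (S : Set (Set X)) (x : X) :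
    ∑' R : S, (R : Set X).indicator (fun _ => (1 : ℝ≥0∞)) x =
      {R ∈ S | x ∈ R}.encard := by
  rw [← ENNReal.tsum_set_one, tsum_subtype S (fun R : Set X => R.indicator (fun _ => 1) x),
    tsum_subtype {R ∈ S | x ∈ R} fun _ => (1 : ℝ≥0∞)]
  congr 1
  ext R
  by_cases hR : R ∈ S <;> by_cases hx : x ∈ R <;> simp [hR, hx]

namespace SetFamily

variable {S : Set (Set X)} {R R' : Set X}

def ancestors (S : Set (Set X)) (R : Set X) : Set (Set X) := {T ∈ S | R ⊆ T}

/-- `ncard` is `0` on infinite sets, so the depth is meaningful only for finitely many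
ancestors. -/
def depth (S : Set (Set X)) (R : Set X) : ℕ := (ancestors S R).ncard

def level (S : Set (Set X)) (k : ℕ) : Set (Set X) := {R ∈ S | depth S R = k}

lemma mem_ancestors_self (hR : R ∈ S) : R ∈ ancestors S R := ⟨hR, subset_rfl⟩

lemma ancestors_anti (h : R ⊆ R') : ancestors S R' ⊆ ancestors S R :=
  fun _ hT => ⟨hT.1, h.trans hT.2⟩

lemma depth_lt_depth (hR : R ∈ S) (hfin : (ancestors S R).Finite) (h : R ⊂ R') :
    depth S R' < depth S R :=
  ncard_lt_ncard
    ⟨ancestors_anti h.subset, fun hsub => h.2 (hsub (mem_ancestors_self hR)).2⟩ hfin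

end SetFamily

namespace IsLaminar

open SetFamily

variable {S : Set (Set X)} {R : Set X}

lemma pairwise_disjoint_level (hS : IsLaminar S)
    (hfin : ∀ R ∈ S, (ancestors S R).Finite) (k : ℕ) : (level S k).Pairwise Disjoint := by
  intro R hR R' hR' hne
  have hdepth : depth S R = depth S R' := hR.2.trans hR'.2.symm
  rcases hS R hR.1 R' hR'.1 with h | h | h
  · exact absurd hdepth (depth_lt_depth hR.1 (hfin R hR.1) (h.ssubset_of_ne hne)).ne'
  · exact absurd hdepth (depth_lt_depth hR'.1 (hfin R' hR'.1) (h.ssubset_of_ne hne.symm)).ne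
  · exact h

lemma exists_mem_level_superset (hS : IsLaminar S) (hne : R.Nonempty)
    (hfin : (ancestors S R).Finite) {k : ℕ} (hk : k ∈ Icc 1 (depth S R)) :
    ∃ T ∈ level S k, R ⊆ T := by
  obtain ⟨x, hx⟩ := hne
  have hfin' : ∀ T ∈ ancestors S R, (ancestors S T).Finite :=
    fun T hT => hfin.subset (ancestors_anti hT.2)
  have hmaps : ∀ T ∈ ancestors S R, depth S T ∈ Icc 1 (depth S R) := fun T hT =>
    ⟨(ncard_pos (hfin' T hT)).2 ⟨T, mem_ancestors_self hT.1⟩,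
      ncard_le_ncard (ancestors_anti hT.2) hfin⟩
  have hinj : ∀ T T' (hT : T ∈ ancestors S R) (hT' : T' ∈ ancestors S R),
      depth S T = depth S T' → T = T' := by
    intro T T' hT hT' hdepth
    by_contra hne
    rcases hS.subset_or_subset_of_mem hT.1 hT'.1 (hT.2 hx) (hT'.2 hx) with h | h
    · exact (depth_lt_depth hT.1 (hfin' T hT) (h.ssubset_of_ne hne)).ne' hdepth
    · exact (depth_lt_depth hT'.1 (hfin' T' hT') (h.ssubset_of_ne (Ne.symm hne))).ne
        hdepth
  obtain ⟨T, hT, hTk⟩ := surj_on_of_inj_on_of_ncard_le (fun T _ => depth S T) hmaps hinj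
    (by simp [depth]) (finite_Icc _ _) k hk
  exact ⟨T, ⟨hT.1, hTk.symm⟩, hT.2⟩

lemma sUnion_level_subset (hS : IsLaminar S) (hne : ∀ R ∈ S, R.Nonempty)
    (hfin : ∀ R ∈ S, (ancestors S R).Finite) {j k : ℕ} (hk : 1 ≤ k) (hkj : k ≤ j) :
    ⋃₀ level S j ⊆ ⋃₀ level S k := by
  rintro x ⟨R, hR, hxR⟩
  obtain ⟨T, hT, hRT⟩ :=
    hS.exists_mem_level_superset (hne R hR.1) (hfin R hR.1) ⟨hk, hR.2 ▸ hkj⟩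
  exact ⟨T, hT, hRT hxR⟩

lemma mem_sUnion_level_of_le_encard (hS : IsLaminar S)
    (hfin : ∀ R ∈ S, (ancestors S R).Finite) {x : X} {k : ℕ} (hk : 1 ≤ k)
    (hx : (k : ℕ∞) ≤ {R ∈ S | x ∈ R}.encard) : x ∈ ⋃₀ level S k := by
  obtain ⟨T, hTsub, hTk⟩ := exists_subset_encard_eq hx
  have hTne : T.Nonempty := by
    rw [← encard_pos, hTk]
    exact_mod_cast hk
  obtain ⟨R, hRmin⟩ := (finite_of_encard_eq_coe hTk).exists_minimal hTne
  obtain ⟨hRS, hxR⟩ := hTsub hRmin.prop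
  have hTanc : T ⊆ ancestors S R := fun A hA =>
    ⟨(hTsub hA).1, (hS.subset_or_subset_of_mem hRS (hTsub hA).1 hxR (hTsub hA).2).elim id
      (hRmin.le_of_le hA)⟩
  have hdepth : k ≤ depth S R := by
    have := encard_le_encard hTanc
    rwa [hTk, ← (hfin R hRS).cast_ncard_eq, Nat.cast_le] at this
  obtain ⟨T', hT', hRT'⟩ := hS.exists_mem_level_superset ⟨x, hxR⟩ (hfin R hRS) ⟨hk, hdepth⟩
  exact ⟨T', hT', hRT' hxR⟩

end IsLaminar

lemma floor_add_one_le_of_ofReal_lt {t : ℝ} (ht : 0 ≤ t) {e : ℕ∞}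
    (h : ENNReal.ofReal t < e) : ((⌊t⌋₊ + 1 : ℕ) : ℕ∞) ≤ e := by
  induction e using ENat.recTopCoe with
  | top => exact le_top
  | coe n =>
    rw [ENat.toENNReal_coe, ← ENNReal.ofReal_natCast, ENNReal.ofReal_lt_ofReal_iff'] at h
    exact_mod_cast (Nat.floor_lt ht).2 h.1

lemma inv_two_pow_floor_div_le {m : ℕ} (hm : 0 < m) (s : ℝ) :
    ((2 : ℝ) ^ (⌊s⌋₊ / m))⁻¹ ≤ 2 * Real.exp (-(Real.log 2 / m) * s) := by
  have hlt := Nat.lt_div_mul_add (a := ⌊s⌋₊) hm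
  set j := ⌊s⌋₊ / m
  have hm' : (0 : ℝ) < m := Nat.cast_pos.2 hm
  have hsj : s ≤ (j + 1) * m := by
    have : ⌊s⌋₊ + 1 ≤ (j + 1) * m := by
      rw [add_mul, one_mul]
      omega
    exact (Nat.lt_floor_add_one s).le.trans (by exact_mod_cast this)
  have hexp : -(j * Real.log 2) ≤ Real.log 2 + -(Real.log 2 / m) * s := by
    have hlog := Real.log_pos one_lt_two
    rw [neg_mul, div_mul_eq_mul_div, le_add_neg_iff_add_le, add_comm, ← le_sub_iff_add_le,
      div_le_iff₀ hm']
    nlinarith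
  calc ((2 : ℝ) ^ j)⁻¹ = Real.exp (-(j * Real.log 2)) := by
        rw [Real.exp_neg, Real.exp_nat_mul, Real.exp_log two_pos]
    _ ≤ Real.exp (Real.log 2 + -(Real.log 2 / m) * s) := Real.exp_le_exp.2 hexp
    _ = 2 * Real.exp (-(Real.log 2 / m) * s) := by rw [Real.exp_add, Real.exp_log two_pos]

lemma le_two_mul_exp_mul_of_two_mul_le {f : ℕ → ℝ≥0∞} (hf : Antitone f) {m : ℕ}
    (hm : 0 < m) (h : ∀ k, 2 * f (k + m) ≤ f k) (s : ℝ) :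
    f ⌊s⌋₊ ≤ ENNReal.ofReal (2 * Real.exp (-(Real.log 2 / m) * s)) * f 0 := by
  have hgeom : ∀ j : ℕ, 2 ^ j * f (j * m) ≤ f 0 := by
    intro j
    induction j with
    | zero => simp
    | succ j ih =>
      calc 2 ^ (j + 1) * f ((j + 1) * m) = 2 ^ j * (2 * f (j * m + m)) := by ring_nf
        _ ≤ 2 ^ j * f (j * m) := by gcongr; exact h _
        _ ≤ f 0 := ih
  set j := ⌊s⌋₊ / m
  calc f ⌊s⌋₊ ≤ f (j * m) := hf (Nat.div_mul_le_self _ _)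
    _ ≤ (2 ^ j)⁻¹ * f 0 := by
        rw [← ENNReal.div_eq_inv_mul, ENNReal.le_div_iff_mul_le (by simp) (by simp), mul_comm]
        exact hgeom j
    _ ≤ _ := by
        gcongr
        rw [← ENNReal.ofReal_ofNat, ← ENNReal.ofReal_pow zero_le_two,
          ← ENNReal.ofReal_inv_of_pos (by positivity)]
        exact ENNReal.ofReal_le_ofReal (inv_two_pow_floor_div_le hm s)

section Measure

variable [MeasurableSpace X] {μ : Measure X}

lemma natCast_mul_mul_measure_le {V B : ℕ → Set X} (hV : Antitone V) (hBV : ∀ j, B j ⊆ V j)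
    (hBm : ∀ j, MeasurableSet (B j)) (hB : Pairwise fun i j => Disjoint (B i) (B j))
    {a : ℝ≥0∞} (ha : ∀ j, a * μ (V j) ≤ μ (B j)) (k m : ℕ) :
    m * a * μ (V (k + m)) ≤ μ (V k) :=
  calc m * a * μ (V (k + m)) = ∑ _j ∈ Finset.Ico k (k + m), a * μ (V (k + m)) := by
        simp [mul_assoc]
    _ ≤ ∑ j ∈ Finset.Ico k (k + m), μ (B j) := Finset.sum_le_sum fun j hj =>
        (mul_le_mul_right (measure_mono (hV (Finset.mem_Ico.1 hj).2.le)) a).trans (ha j)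
    _ = μ (⋃ j ∈ Finset.Ico k (k + m), B j) :=
        (measure_biUnion_finset (fun i _ j _ h => hB h) fun j _ => hBm j).symm
    _ ≤ μ (V k) := measure_mono <|
        iUnion₂_subset fun j hj => (hBV j).trans (hV (Finset.mem_Ico.1 hj).1)

open SetFamily

variable {η : ℝ} {S 𝒮 : Set (Set X)} {E : Set X → Set X}

def IsSparseWitness (μ : Measure X) (η : ℝ) (S : Set (Set X)) (E : Set X → Set X) : Prop :=
  (∀ R ∈ S, E R ⊆ R ∧ MeasurableSet (E R) ∧ ENNReal.ofReal η * μ R ≤ μ (E R)) ∧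
    S.Pairwise fun R R' => Disjoint (E R) (E R')

namespace IsSparseWitness

lemma mono (h : IsSparseWitness μ η 𝒮 E) (hS : S ⊆ 𝒮) : IsSparseWitness μ η S E :=
  ⟨fun R hR => h.1 R (hS hR), h.2.mono hS⟩

lemma finite_ancestors (hE : IsSparseWitness μ η S E) (hη : 0 < η) {Q : Set X} (hQ : μ Q ≠ ∞)
    (hSQ : ∀ R ∈ S, R ⊆ Q) {R : Set X} (hR : 0 < μ R) : (ancestors S R).Finite := by
  have hε : 0 < ENNReal.ofReal η * μ R := ENNReal.mul_pos (ENNReal.ofReal_pos.2 hη).ne' hR.ne'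
  have hfin := Measure.finite_const_le_meas_of_disjoint_iUnion μ hε
    (As := fun T : ancestors S R => E T) (fun T => (hE.1 T T.2.1).2.1)
    (fun T T' h => hE.2 T.2.1 T'.2.1 (Subtype.coe_injective.ne h))
    (ne_top_of_le_ne_top hQ <| measure_mono <|
      iUnion_subset fun T => (hE.1 T T.2.1).1.trans (hSQ T T.2.1))
  have huniv : {T : ancestors S R | ENNReal.ofReal η * μ R ≤ μ (E T)} = univ :=
    eq_univ_of_forall fun T =>
      (mul_le_mul_right (measure_mono T.2.2) _).trans (hE.1 T T.2.1).2.2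
  rw [huniv] at hfin
  exact finite_coe_iff.1 (finite_univ_iff.1 hfin)

lemma ofReal_mul_measure_sUnion_level_le (hE : IsSparseWitness μ η S E) (hS : IsLaminar S)
    (hfin : ∀ R ∈ S, (ancestors S R).Finite) (hSc : S.Countable)
    (hSm : ∀ R ∈ S, MeasurableSet R) (k : ℕ) :
    ENNReal.ofReal η * μ (⋃₀ level S k) ≤ μ (⋃ R ∈ level S k, E R) := by
  have hc : (level S k).Countable := hSc.mono (sep_subset _ _)
  rw [measure_sUnion hc (hS.pairwise_disjoint_level hfin k) fun R hR => hSm R hR.1,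
    measure_biUnion hc (fun R hR R' hR' h => hE.2 hR.1 hR'.1 h) fun R hR => (hE.1 R hR.1).2.1,
    ← ENNReal.tsum_mul_left]
  exact ENNReal.tsum_le_tsum fun R => (hE.1 R R.2.1).2.2

lemma disjoint_biUnion_level (hE : IsSparseWitness μ η S E) {j k : ℕ} (hjk : j ≠ k) :
    Disjoint (⋃ R ∈ level S j, E R) (⋃ R ∈ level S k, E R) := by
  simp only [disjoint_iUnion₂_left, disjoint_iUnion₂_right]
  intro R' hR' R hR
  exact hE.2 hR.1 hR'.1 fun h => hjk (by rw [← hR.2, ← hR'.2, h])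

theorem measure_lt_tsum_indicator_le (hE : IsSparseWitness μ η S E) (hS : IsLaminar S)
    (hSc : S.Countable) (hSm : ∀ R ∈ S, MeasurableSet R) (hSpos : ∀ R ∈ S, 0 < μ R)
    {Q : Set X} (hQ : μ Q ≠ ∞) (hSQ : ∀ R ∈ S, R ⊆ Q) {m : ℕ} (hm : 2 ≤ (m : ℝ) * η)
    {t : ℝ} (ht : 0 ≤ t) :
    μ {x | ENNReal.ofReal t < ∑' R : S, (R : Set X).indicator (fun _ => (1 : ℝ≥0∞)) x}
      ≤ ENNReal.ofReal (2 * Real.exp (-(Real.log 2 / m) * t)) * μ Q := by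
  have hm0 : 0 < m := Nat.pos_of_ne_zero fun h => by simp [h] at hm; linarith
  have hη : 0 < η := pos_of_mul_pos_right (by linarith) (Nat.cast_nonneg m)
  have hfin : ∀ R ∈ S, (ancestors S R).Finite :=
    fun R hR => hE.finite_ancestors hη hQ hSQ (hSpos R hR)
  set V : ℕ → Set X := fun k => ⋃₀ level S (k + 1)
  have hV : Antitone V := fun k j hkj =>
    hS.sUnion_level_subset (fun R hR => nonempty_of_measure_ne_zero (hSpos R hR).ne') hfin
      le_add_self (by omega)
  have hdecay : ∀ k, 2 * μ (V (k + m)) ≤ μ (V k) := by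
    intro k
    have h2 : (2 : ℝ≥0∞) ≤ m * ENNReal.ofReal η := by
      rw [← ENNReal.ofReal_natCast, ← ENNReal.ofReal_mul (Nat.cast_nonneg m),
        ← ENNReal.ofReal_ofNat]
      exact ENNReal.ofReal_le_ofReal hm
    calc 2 * μ (V (k + m)) ≤ m * ENNReal.ofReal η * μ (V (k + m)) := by gcongr
      _ ≤ μ (V k) := natCast_mul_mul_measure_le hV
        (B := fun j => ⋃ R ∈ level S (j + 1), E R)
        (fun j => iUnion₂_subset fun R hR => (hE.1 R hR.1).1.trans (subset_sUnion_of_mem hR))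
        (fun j => MeasurableSet.biUnion (hSc.mono (sep_subset _ _))
          fun R hR => (hE.1 R hR.1).2.1)
        (fun i j hij => hE.disjoint_biUnion_level (by omega))
        (fun j => hE.ofReal_mul_measure_sUnion_level_le hS hfin hSc hSm (j + 1)) k m
  calc μ {x | ENNReal.ofReal t < ∑' R : S, (R : Set X).indicator (fun _ => (1 : ℝ≥0∞)) x}
      ≤ μ (V ⌊t⌋₊) := measure_mono fun x hx =>
        hS.mem_sUnion_level_of_le_encard hfin le_add_self
          (floor_add_one_le_of_ofReal_lt ht (tsum_indicator_one_eq_encard S x ▸ hx))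
    _ ≤ ENNReal.ofReal (2 * Real.exp (-(Real.log 2 / m) * t)) * μ (V 0) :=
        le_two_mul_exp_mul_of_two_mul_le (fun _ _ h => measure_mono (hV h)) hm0 hdecay t
    _ ≤ _ := by
        gcongr
        exact sUnion_subset fun R hR => hSQ R hR.1

end IsSparseWitness

end Measure

lemma IsDyadicGrid.isLaminar {n : ℕ} {𝒟 : Set (Set (Fin n → ℝ))} (h : IsDyadicGrid 𝒟) :
    IsLaminar 𝒟 := by
  simpa only [IsLaminar, disjoint_iff_inter_eq_empty] using h.2.1

namespace IsCube

variable {n : ℕ} {Q : Set (Fin n → ℝ)}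

lemma measurableSet (h : IsCube Q) : MeasurableSet Q := by
  obtain ⟨a, r, -, rfl⟩ := h
  exact MeasurableSet.univ_pi fun _ => measurableSet_Ico

lemma volume_pos (h : IsCube Q) : 0 < volume Q := by
  obtain ⟨a, r, hr, rfl⟩ := h
  simpa [Real.volume_pi_Ico] using ENNReal.pow_pos (ENNReal.ofReal_pos.2 hr) n

lemma volume_ne_top_s14 (h : IsCube Q) : volume Q ≠ ∞ := by
  obtain ⟨a, r, -, rfl⟩ := h
  simp [Real.volume_pi_Ico]

end IsCube

theorem sparse_counting_exponential_decay_general (n : ℕ) (η : ℝ) (hη : 0 < η) :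
    ∃ c α : ℝ, 0 < c ∧ 0 < α ∧
      ∀ (𝒮 : Set (Set (Fin n → ℝ))), IsSparseDyadic η 𝒮 →
      ∀ (Q : Set (Fin n → ℝ)), IsCube Q →
      ∀ t : ℝ, 0 < t →
        volume {x ∈ Q | ENNReal.ofReal t <
            ∑' Q' : {Q' // Q' ∈ 𝒮 ∧ Q' ⊆ Q},
              (Q' : Set (Fin n → ℝ)).indicator (fun _ => (1 : ℝ≥0∞)) x}
          ≤ ENNReal.ofReal (c * Real.exp (-α * t)) * volume Q := by
  set m := ⌈2 / η⌉₊
  have hm : 2 ≤ (m : ℝ) * η := (div_le_iff₀ hη).1 (Nat.le_ceil _)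
  have hm0 : 0 < m := Nat.ceil_pos.2 (by positivity)
  refine ⟨2, Real.log 2 / m, two_pos,
    div_pos (Real.log_pos one_lt_two) (Nat.cast_pos.2 hm0), ?_⟩
  rintro 𝒮 ⟨⟨E, hE⟩, 𝒟, h𝒟, h𝒮𝒟⟩ Q hQ t ht
  set S := {R | R ∈ 𝒮 ∧ R ⊆ Q}
  have hS𝒟 : S ⊆ 𝒟 := fun R hR => h𝒮𝒟 hR.1
  have hcube : ∀ R ∈ S, IsCube R := fun R hR => h𝒟.1 R (hS𝒟 hR)
  refine (measure_mono fun x hx => hx.2).trans ?_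
  exact IsSparseWitness.measure_lt_tsum_indicator_le
    (IsSparseWitness.mono hE fun R hR => hR.1) (h𝒟.isLaminar.mono hS𝒟) (h𝒟.2.2.mono hS𝒟)
    (fun R hR => (hcube R hR).measurableSet) (fun R hR => (hcube R hR).volume_pos)
    hQ.volume_ne_top_s14 (fun R hR => hR.2) hm ht.le

/-- Exponential decay for the sparse counting function:
`|{x ∈ Q : ∑_{Q' ∈ 𝒮, Q' ⊆ Q} 1_{Q'}(x) > t}| ≤ c e^{−αt} |Q|`. -/
theorem sparse_counting_exponential_decay (n : ℕ) (η : ℝ) (hη : 0 < η) (hη1 : η ≤ 1) :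
    ∃ c α : ℝ, 0 < c ∧ 0 < α ∧
      ∀ (𝒮 : Set (Set (Fin n → ℝ))), IsSparseDyadic η 𝒮 →
      ∀ (Q : Set (Fin n → ℝ)), IsCube Q →
      ∀ t : ℝ, 0 < t →
        volume {x ∈ Q | ENNReal.ofReal t <
            ∑' Q' : {Q' // Q' ∈ 𝒮 ∧ Q' ⊆ Q},
              (Q' : Set (Fin n → ℝ)).indicator (fun _ => (1 : ℝ≥0∞)) x}
          ≤ ENNReal.ofReal (c * Real.exp (-α * t)) * volume Q :=
  sparse_counting_exponential_decay_general n η hη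

end
end
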